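/- Kernel ℓ1-Norm Bound by the Convolution Spectral Norm (key bound in Lemma 2.7): Let M, C, D be powers of two with D ≤ M, let K be a rank-4 kernel tensor with complex entries K_{i,j,k,l} for i,j ∈ [C], k,l ∈ [D], let Q := Σ_{j=0}^{M−2} |j+1⟩⟨j| be the M×M discrete unilateral shift matrix, and let 𝒞 := Σ_{i∈[C]} Σ_{j∈[C]} Σ_{k∈[D]} Σ_{l∈[D]} K_{i,j,k,l} (|i⟩⟨j| ⊗ Q^l ⊗ Q^k). Then for every x₁ ∈ [C], Σ_{j∈[C]} Σ_{k∈[D]} Σ_{l∈[D]} |K_{x₁,j,k,l}|² ≤ ‖𝒞‖₂², and consequently Σ_{i,j∈[C]} Σ_{k,l∈[D]} |K_{i,j,k,l}| ≤ D C^{3/2} ‖𝒞‖₂, where ‖𝒞‖₂ is the spectral (ℓ2 operator) norm. -/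

import Mathlib

open scoped Kronecker Matrix

noncomputable section

/-- The spectral (ℓ²→ℓ²) operator norm of a matrix. -/
def specNorm {𝕜 : Type*} [RCLike 𝕜] {m n : Type*} [Fintype m] [Fintype n] [DecidableEq n]
    (A : Matrix m n 𝕜) : ℝ :=
  ‖LinearMap.toContinuousLinearMap (Matrix.toEuclideanLin A)‖

/-! Writing `Q` for the shift, `(Q ^ l) a c = [a = c + l]`, so the entry of `𝒞` in row
`(i, D - 1, D - 1)` and column `(j, D - 1 - l, D - 1 - k)` is exactly `K i j k l`, and these columns
are distinct. Thus the slice `K i` is part of one row of `𝒞`, and a row has ℓ² norm at most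
`‖𝒞ᴴ e_row‖ ≤ ‖𝒞ᴴ‖₂ = ‖𝒞‖₂`. Cauchy–Schwarz over the `C D²` entries of a slice, summed over the
`C` slices, gives the ℓ¹ bound `C · √C · D · ‖𝒞‖₂`. -/

open Matrix Function

def shiftMatrix (M : ℕ) (R : Type*) [Zero R] [One R] : Matrix (Fin M) (Fin M) R :=
  of fun i j => if (i : ℕ) = (j : ℕ) + 1 then 1 else 0

theorem shiftMatrix_pow_apply {R : Type*} [Semiring R] {M : ℕ} (l : ℕ) (a b : Fin M) :
    (shiftMatrix M R ^ l) a b = if (a : ℕ) = b + l then 1 else 0 := by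
  induction l generalizing a with
  | zero => simp [one_apply, Fin.ext_iff]
  | succ l ih =>
    rw [pow_succ', mul_apply]
    simp only [ih]
    simp only [shiftMatrix, of_apply, ite_mul, one_mul, zero_mul]
    by_cases ha : (a : ℕ) = 0
    · have : ∀ c : Fin M, (a : ℕ) ≠ c + 1 := by omega
      simp only [this, if_false, Finset.sum_const_zero]
      rw [if_neg (by omega)]
    · rw [Finset.sum_eq_single ⟨a - 1, by omega⟩
        (fun c _ hc => if_neg fun h => hc (Fin.ext (by simp; omega))) (by simp)]
      simp only [if_pos (by omega : (a : ℕ) = a - 1 + 1),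
        show (a : ℕ) - 1 = b + l ↔ (a : ℕ) = b + (l + 1) by omega]

theorem Fintype.sum_comp_le_sum_of_injective {α β M : Type*} [Fintype α] [Fintype β]
    [AddCommMonoid M] [PartialOrder M] [IsOrderedAddMonoid M] {e : α → β} (he : Injective e)
    {f : β → M} (hf : 0 ≤ f) : ∑ a, f (e a) ≤ ∑ b, f b := by
  simpa using Finset.sum_le_univ_sum_of_nonneg (s := Finset.univ.map ⟨e, he⟩) hf

theorem Real.sum_le_sqrt_card_mul_sqrt_sum_sq {α : Type*} [Fintype α] (f : α → ℝ) :
    ∑ a, f a ≤ √(Fintype.card α) * √(∑ a, f a ^ 2) := by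
  simpa using Real.sum_mul_le_sqrt_mul_sqrt Finset.univ 1 f

open scoped Matrix.Norms.L2Operator in
theorem sum_norm_sq_row_le_specNorm_sq {𝕜 : Type*} [RCLike 𝕜] {m n : Type*} [Fintype m]
    [Fintype n] [DecidableEq n] (A : Matrix m n 𝕜) (r : m) :
    ∑ c, ‖A r c‖ ^ 2 ≤ specNorm A ^ 2 := by
  classical
  have hrow := l2_opNorm_mulVec Aᴴ (EuclideanSpace.single r 1)
  rw [l2_opNorm_conjTranspose, PiLp.norm_single, norm_one, mul_one] at hrow
  change _ ≤ ‖A‖ ^ 2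
  calc ∑ c, ‖A r c‖ ^ 2 = ‖(EuclideanSpace.equiv n 𝕜).symm (Aᴴ *ᵥ Pi.single r 1)‖ ^ 2 := by
        simp [EuclideanSpace.norm_sq_eq]
    _ ≤ ‖A‖ ^ 2 := pow_le_pow_left₀ (norm_nonneg _) hrow 2

section kernelMatrix

variable {R : Type*} [Semiring R] {ι : Type*} [Fintype ι] [DecidableEq ι] {D M : ℕ}

def kernelMatrix (Q : Matrix (Fin M) (Fin M) R) (K : ι → ι → Fin D → Fin D → R) :
    Matrix (ι × Fin M × Fin M) (ι × Fin M × Fin M) R :=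
  ∑ i, ∑ j, ∑ k : Fin D, ∑ l : Fin D,
    K i j k l • (single i j (1 : R) ⊗ₖ ((Q ^ (l : ℕ)) ⊗ₖ (Q ^ (k : ℕ))))

theorem kernelMatrix_apply (Q : Matrix (Fin M) (Fin M) R)
    (K : ι → ι → Fin D → Fin D → R) (i j : ι) (a b c d : Fin M) :
    kernelMatrix Q K (i, a, b) (j, c, d) =
      ∑ k, ∑ l, K i j k l * ((Q ^ (l : ℕ)) a c * (Q ^ (k : ℕ)) b d) := by
  simp [kernelMatrix, Matrix.sum_apply, kroneckerMap_apply, single_apply, ite_and]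

theorem kernelMatrix_shiftMatrix_apply_last (h : D + 1 ≤ M)
    (K : ι → ι → Fin (D + 1) → Fin (D + 1) → R) (i j : ι) (k l : Fin (D + 1)) :
    kernelMatrix (shiftMatrix M R) K (i, Fin.castLE h (Fin.last D), Fin.castLE h (Fin.last D))
      (j, Fin.castLE h l.rev, Fin.castLE h k.rev) = K i j k l := by
  have hrev (m n : Fin (D + 1)) : D = D - m + n ↔ n = m := by
    rw [Fin.ext_iff]
    omega
  simp [kernelMatrix_apply, shiftMatrix_pow_apply, hrev]

variable {𝕜 : Type*} [RCLike 𝕜]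

theorem sum_norm_sq_kernel_le_specNorm_sq (hDM : D ≤ M) (K : ι → ι → Fin D → Fin D → 𝕜)
    (i : ι) :
    ∑ j, ∑ k, ∑ l, ‖K i j k l‖ ^ 2 ≤ specNorm (kernelMatrix (shiftMatrix M 𝕜) K) ^ 2 := by
  obtain _ | D := D
  · simpa using sq_nonneg _
  set A := kernelMatrix (shiftMatrix M 𝕜) K
  let e : ι × Fin (D + 1) × Fin (D + 1) → ι × Fin M × Fin M :=
    fun p => (p.1, Fin.castLE hDM p.2.2.rev, Fin.castLE hDM p.2.1.rev)
  have he : Injective e := by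
    rintro ⟨j, k, l⟩ ⟨j', k', l'⟩ h
    simp only [e, Prod.mk.injEq, Fin.castLE_inj, Fin.rev_inj] at h
    simp [h]
  let r := (i, Fin.castLE hDM (Fin.last D), Fin.castLE hDM (Fin.last D))
  calc ∑ j, ∑ k, ∑ l, ‖K i j k l‖ ^ 2 = ∑ p, ‖A r (e p)‖ ^ 2 := by
        simp only [Fintype.sum_prod_type, A, e, r, kernelMatrix_shiftMatrix_apply_last]
    _ ≤ ∑ c, ‖A r c‖ ^ 2 :=
        Fintype.sum_comp_le_sum_of_injective he (f := fun c => ‖A r c‖ ^ 2) fun _ => sq_nonneg _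
    _ ≤ specNorm A ^ 2 := sum_norm_sq_row_le_specNorm_sq A r

theorem sum_norm_kernel_le (hDM : D ≤ M) (K : ι → ι → Fin D → Fin D → 𝕜) :
    ∑ i, ∑ j, ∑ k, ∑ l, ‖K i j k l‖ ≤
      Fintype.card ι * (√(Fintype.card ι) * D * specNorm (kernelMatrix (shiftMatrix M 𝕜) K)) := by
  set σ := specNorm (kernelMatrix (shiftMatrix M 𝕜) K)
  have hrow (i : ι) : ∑ j, ∑ k, ∑ l, ‖K i j k l‖ ≤ √(Fintype.card ι) * D * σ :=
    calc ∑ j, ∑ k, ∑ l, ‖K i j k l‖ = ∑ p : ι × Fin D × Fin D, ‖K i p.1 p.2.1 p.2.2‖ := by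
          simp only [Fintype.sum_prod_type]
      _ ≤ √(Fintype.card (ι × Fin D × Fin D)) *
            √(∑ p : ι × Fin D × Fin D, ‖K i p.1 p.2.1 p.2.2‖ ^ 2) :=
          Real.sum_le_sqrt_card_mul_sqrt_sum_sq _
      _ ≤ √(Fintype.card (ι × Fin D × Fin D)) * σ := by
          gcongr
          refine Real.sqrt_le_iff.mpr ⟨norm_nonneg _, ?_⟩
          simpa only [Fintype.sum_prod_type] using sum_norm_sq_kernel_le_specNorm_sq hDM K i
      _ = √(Fintype.card ι) * D * σ := by
          simp [Fintype.card_prod, Real.sqrt_mul, Real.sqrt_mul_self, mul_assoc]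
  calc ∑ i, ∑ j, ∑ k, ∑ l, ‖K i j k l‖ ≤ ∑ _i : ι, √(Fintype.card ι) * D * σ :=
        Finset.sum_le_sum fun i _ => hrow i
    _ = _ := by simp

end kernelMatrix

theorem kernel_l1_norm_bound
    (mm cc dd : ℕ) (hDM : (2:ℕ)^dd ≤ 2^mm)
    (K : Fin (2^cc) → Fin (2^cc) → Fin (2^dd) → Fin (2^dd) → ℂ)
    (Q : Matrix (Fin (2^mm)) (Fin (2^mm)) ℂ)
    (hQ : Q = Matrix.of fun i j : Fin (2^mm) => if (i : ℕ) = (j : ℕ) + 1 then 1 else 0)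
    (Cmat : Matrix (Fin (2^cc) × (Fin (2^mm) × Fin (2^mm)))
        (Fin (2^cc) × (Fin (2^mm) × Fin (2^mm))) ℂ)
    (hC : Cmat = ∑ i : Fin (2^cc), ∑ j : Fin (2^cc), ∑ k : Fin (2^dd), ∑ l : Fin (2^dd),
        K i j k l • (Matrix.single i j (1 : ℂ) ⊗ₖ ((Q ^ (l : ℕ)) ⊗ₖ (Q ^ (k : ℕ))))) :
    (∀ x₁ : Fin (2^cc),
      ∑ j : Fin (2^cc), ∑ k : Fin (2^dd), ∑ l : Fin (2^dd),
          ‖K x₁ j k l‖ ^ 2 ≤ specNorm Cmat ^ 2) ∧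
    ∑ i : Fin (2^cc), ∑ j : Fin (2^cc), ∑ k : Fin (2^dd), ∑ l : Fin (2^dd),
        ‖K i j k l‖
      ≤ ((2:ℝ)^dd) * ((2:ℝ)^cc) ^ ((3:ℝ)/2) * specNorm Cmat := by
  subst hQ
  obtain rfl : Cmat = kernelMatrix (shiftMatrix (2 ^ mm) ℂ) K := hC
  refine ⟨sum_norm_sq_kernel_le_specNorm_sq hDM K, (sum_norm_kernel_le hDM K).trans_eq ?_⟩
  have h32 : ((2:ℝ) ^ cc) ^ ((3:ℝ) / 2) = 2 ^ cc * √(2 ^ cc) := by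
    rw [show (3:ℝ) / 2 = 1 + 1 / 2 by norm_num, Real.rpow_add (by positivity), Real.rpow_one,
      ← Real.sqrt_eq_rpow]
  rw [h32, Fintype.card_fin]
  push_cast
  ring
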